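/- Let A, B be categories with pullbacks. The category whose objects are pullback-preserving functors A → B and whose morphisms are cartesian natural transformations has pullbacks, computed pointwise in B. -/

import Mathlib

open CategoryTheory CategoryTheory.Limits

universe w₁ w₂ v₁ v₂ v₃ u₁ u₂ u₃

/-- A functor preserves pullbacks if it sends pullback squares to pullback squares. -/
def PreservesPB {A : Type u₁} {B : Type u₂} [Category.{v₁} A] [Category.{v₂} B]
    (F : A ⥤ B) : Prop :=
  ∀ {W X Y Z : A} (fst : W ⟶ X) (snd : W ⟶ Y) (f : X ⟶ Z) (g : Y ⟶ Z),
    IsPullback fst snd f g → IsPullback (F.map fst) (F.map snd) (F.map f) (F.map g)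

/-- A natural transformation is cartesian if all its naturality squares are pullbacks. -/
def Cartesian {A : Type u₁} {B : Type u₂} [Category.{v₁} A] [Category.{v₂} B]
    {F G : A ⥤ B} (r : F ⟶ G) : Prop :=
  ∀ {a b : A} (α : a ⟶ b), IsPullback (F.map α) (r.app a) (r.app b) (G.map α)

/-- The category of pullback-preserving functors `A ⥤ B` and cartesian natural
transformations. -/
structure PBFunctor (A : Type u₁) (B : Type u₂) [Category.{v₁} A] [Category.{v₂} B] where
  obj : A ⥤ B
  preserves : PreservesPB obj

instance PBFunctor.category {A : Type u₁} {B : Type u₂} [Category.{v₁} A] [Category.{v₂} B] :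
    Category (PBFunctor A B) where
  Hom F G := { r : F.obj ⟶ G.obj // Cartesian r }
  id F := ⟨𝟙 F.obj, fun α => by
    simp only [NatTrans.id_app]
    exact IsPullback.of_vert_isIso ⟨by simp⟩⟩
  comp {F G H} r s := ⟨r.1 ≫ s.1, fun α => by
    simpa using (r.2 α).paste_vert (s.2 α)⟩
  id_comp f := by apply Subtype.ext; simp
  comp_id f := by apply Subtype.ext; simp
  assoc f g h := by apply Subtype.ext; simp

@[simp] lemma PBFunctor.id_val {A : Type u₁} {B : Type u₂} [Category.{v₁} A]
    [Category.{v₂} B] (F : PBFunctor A B) : (𝟙 F : F ⟶ F).1 = 𝟙 F.obj := rfl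

@[simp] lemma PBFunctor.comp_val {A : Type u₁} {B : Type u₂} [Category.{v₁} A]
    [Category.{v₂} B] {F G H : PBFunctor A B} (r : F ⟶ G) (s : G ⟶ H) :
    (r ≫ s : F ⟶ H).1 = r.1 ≫ s.1 := rfl

/-!
Everything reduces to pasting of pullback squares. The pointwise pullback `P` of `t` and `u`
comes with projections that are base changes of the cartesian transformations `u` and `t`,
hence are cartesian; a functor carrying a cartesian transformation into a pullback-preserving
functor preserves pullbacks itself, so `P` is again an object of `[A, B]_pb`. A cone over
`t, u` in `[A, B]_pb` factors through `P` in the functor category, and the factorisation is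
cartesian because its composite with the cartesian projection to `F` is.
-/

section

variable {A : Type u₁} {B : Type u₂} [Category.{v₁} A] [Category.{v₂} B]

lemma Cartesian.of_comp {F G H : A ⥤ B} {α : F ⟶ G} {β : G ⟶ H}
    (hαβ : Cartesian (α ≫ β)) (hβ : Cartesian β) : Cartesian α := fun f =>
  IsPullback.of_bot (by simpa using hαβ f) (α.naturality f) (hβ f)

lemma Cartesian.of_isPullback_app {P F G H : A ⥤ B} {r : P ⟶ F} {s : P ⟶ G} {t : F ⟶ H}
    {u : G ⟶ H} (h : ∀ a, IsPullback (r.app a) (s.app a) (t.app a) (u.app a))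
    (hu : Cartesian u) : Cartesian r := by
  intro a b f
  have hpaste := (h a).flip.paste_horiz (hu f)
  rw [← s.naturality f, ← t.naturality f] at hpaste
  exact hpaste.of_right (r.naturality f) (h b).flip

lemma PreservesPB.of_cartesian {P F : A ⥤ B} {r : P ⟶ F} (hr : Cartesian r)
    (hF : PreservesPB F) : PreservesPB P := by
  intro W X Y Z fst snd f g hsq
  have hpaste := (hr fst).paste_vert (hF fst snd f g hsq)
  rw [← r.naturality snd, ← r.naturality f] at hpaste
  exact hpaste.of_bot (by rw [← P.map_comp, ← P.map_comp, hsq.w]) (hr g)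

namespace PBFunctor

lemma isPullback_of_isPullback_val {P F G H : PBFunctor A B} {r : P ⟶ F} {s : P ⟶ G}
    {t : F ⟶ H} {u : G ⟶ H} (h : IsPullback r.1 s.1 t.1 u.1) : IsPullback r s t u := by
  have hw : r ≫ t = s ≫ u := Subtype.ext h.w
  refine IsPullback.of_isLimit' ⟨hw⟩ (PullbackCone.IsLimit.mk _
    (fun c => ⟨h.lift c.fst.1 c.snd.1 (congrArg Subtype.val c.condition),
      Cartesian.of_comp (by rw [h.lift_fst]; exact c.fst.2) r.2⟩)
    (fun c => Subtype.ext (h.lift_fst _ _ _)) (fun c => Subtype.ext (h.lift_snd _ _ _))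
    (fun c m hm₁ hm₂ => Subtype.ext (h.hom_ext ?_ ?_)))
  · simpa [h.lift_fst] using congrArg Subtype.val hm₁
  · simpa [h.lift_snd] using congrArg Subtype.val hm₂

variable [HasPullbacks B] {F G H : PBFunctor A B} (t : F ⟶ H) (u : G ⟶ H)

lemma isPullback_app (a : A) :
    IsPullback ((pullback.fst t.1 u.1).app a) ((pullback.snd t.1 u.1).app a)
      (t.1.app a) (u.1.app a) :=
  (IsPullback.of_hasPullback t.1 u.1).map ((evaluation A B).obj a)

lemma cartesian_pullback_fst : Cartesian (pullback.fst t.1 u.1) :=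
  Cartesian.of_isPullback_app (isPullback_app t u) u.2

lemma cartesian_pullback_snd : Cartesian (pullback.snd t.1 u.1) :=
  Cartesian.of_isPullback_app (fun a => (isPullback_app t u a).flip) t.2

noncomputable def pointwisePullback : PBFunctor A B :=
  ⟨pullback t.1 u.1, PreservesPB.of_cartesian (cartesian_pullback_fst t u) F.preserves⟩

noncomputable def pointwisePullbackFst : pointwisePullback t u ⟶ F :=
  ⟨pullback.fst t.1 u.1, cartesian_pullback_fst t u⟩

noncomputable def pointwisePullbackSnd : pointwisePullback t u ⟶ G :=
  ⟨pullback.snd t.1 u.1, cartesian_pullback_snd t u⟩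

lemma isPullback_pointwisePullback :
    IsPullback (pointwisePullbackFst t u) (pointwisePullbackSnd t u) t u :=
  isPullback_of_isPullback_val (IsPullback.of_hasPullback t.1 u.1)

end PBFunctor

end

theorem stmt_8_general {A : Type u₁} {B : Type u₂} [Category.{v₁} A] [Category.{v₂} B]
    [HasPullbacks B] :
    HasPullbacks (PBFunctor A B) ∧
      ∀ {F G H : PBFunctor A B} (t : F ⟶ H) (u : G ⟶ H),
        ∃ (P : PBFunctor A B) (r : P ⟶ F) (s : P ⟶ G),
          (∀ a : A, IsPullback (r.1.app a) (s.1.app a) (t.1.app a) (u.1.app a)) ∧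
          IsPullback r s t u :=
  ⟨@hasPullbacks_of_hasLimit_cospan _ _ fun {_ _ _ t u} =>
      (PBFunctor.isPullback_pointwisePullback t u).hasPullback,
    fun t u => ⟨PBFunctor.pointwisePullback t u, PBFunctor.pointwisePullbackFst t u,
      PBFunctor.pointwisePullbackSnd t u, PBFunctor.isPullback_app t u,
      PBFunctor.isPullback_pointwisePullback t u⟩⟩

/-- `[A,B]_pb` has pullbacks, computed pointwise in `B`. -/
theorem stmt_8 {A : Type u₁} {B : Type u₂} [Category.{v₁} A] [Category.{v₂} B]
    [HasPullbacks A] [HasPullbacks B] :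
    HasPullbacks (PBFunctor A B) ∧
      ∀ {F G H : PBFunctor A B} (t : F ⟶ H) (u : G ⟶ H),
        ∃ (P : PBFunctor A B) (r : P ⟶ F) (s : P ⟶ G),
          (∀ a : A, IsPullback (r.1.app a) (s.1.app a) (t.1.app a) (u.1.app a)) ∧
          IsPullback r s t u :=
  stmt_8_general
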